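/- arXiv:1010.2361 — 3 statements merged into one kernel-verified Lean document; each statement's English description precedes it below -/
import Mathlib

section
/- Let d ≥ 1 and let ψ₁, …, ψ_{d²} be d² unit vectors in ℂ^d with Σ_{j=1}^{d²} ψ_j ψ_j† = d·I. Suppose there exist d² unit vectors φ₁, …, φ_{d²} in ℂ^d forming a SIC POVM (i.e., |⟨φ_j, φ_k⟩|² = 1/(d+1) for all j ≠ k) such that for every index j one has ∏_{k=1}^{d²} |⟨φ_j, ψ_k⟩|² = (d+1)^{−(d²−1)}. Then |⟨ψ_j, ψ_k⟩|² = 1/(d+1) for all j ≠ k; that is, the vectors ψ₁, …, ψ_{d²} themselves form a SIC POVM. -/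
open scoped BigOperators

/-- The standard Hermitian inner product on `ℂ^d`, conjugate-linear in the
first argument: `⟨φ, ψ⟩ = ∑ i, conj (φ i) * ψ i`. -/
noncomputable def inp {d : ℕ} (φ ψ : Fin d → ℂ) : ℂ :=
  ∑ i, (starRingEnd ℂ) (φ i) * ψ i

set_option maxHeartbeats 1000000

lemma conj_inp {d : ℕ} (x y : Fin d → ℂ) : (starRingEnd ℂ) (inp x y) = inp y x := by
  simp only [inp, map_sum, map_mul, RingHomCompTriple.comp_apply, Complex.conj_conj]
  exact Finset.sum_congr rfl fun i _ => by ring_nf; simp [mul_comm]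

lemma abs_sq_inp_cast {d : ℕ} (x y : Fin d → ℂ) :
    ((‖inp x y‖ ^ 2 : ℝ) : ℂ) = inp x y * inp y x := by
  rw [Complex.sq_norm, ← Complex.mul_conj, conj_inp]

lemma sum_swap4 {α β γ δ : Type*} [Fintype α] [Fintype β] [Fintype γ] [Fintype δ]
    (f : α → β → γ → δ → ℂ) :
    ∑ a, ∑ b, ∑ c, ∑ e, f a b c e = ∑ c, ∑ e, ∑ a, ∑ b, f a b c e := by
  calc ∑ a, ∑ b, ∑ c, ∑ e, f a b c e
      = ∑ a, ∑ c, ∑ e, ∑ b, f a b c e := Finset.sum_congr rfl fun a _ => by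
        rw [Finset.sum_comm]
        exact Finset.sum_congr rfl fun c _ => Finset.sum_comm
    _ = ∑ c, ∑ a, ∑ e, ∑ b, f a b c e := Finset.sum_comm
    _ = ∑ c, ∑ e, ∑ a, ∑ b, f a b c e := Finset.sum_congr rfl fun c _ => Finset.sum_comm

lemma frame_sum {d m : ℕ} (F : Fin m → (Fin d → ℂ))
    (hF : ∑ j, Matrix.vecMulVec (F j) (star (F j)) = (d : ℂ) • (1 : Matrix (Fin d) (Fin d) ℂ))
    (x : Fin d → ℂ) :
    ∑ j, inp x (F j) * inp (F j) x = (d : ℂ) * inp x x := by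
  have hent : ∀ i i', ∑ j, F j i * (starRingEnd ℂ) (F j i')
      = (d : ℂ) * (if i = i' then 1 else 0) := by
    intro i i'
    have h := congrFun (congrFun hF i) i'
    simpa [Matrix.sum_apply, Matrix.vecMulVec_apply, Matrix.one_apply, Pi.star_apply,
      mul_comm] using h
  calc ∑ j, inp x (F j) * inp (F j) x
      = ∑ j, ∑ i, ∑ i', ((starRingEnd ℂ) (x i) * x i') * (F j i * (starRingEnd ℂ) (F j i')) := by
        refine Finset.sum_congr rfl fun j _ => ?_
        rw [inp, inp, Finset.sum_mul_sum]
        exact Finset.sum_congr rfl fun i _ => Finset.sum_congr rfl fun i' _ => by ring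
    _ = ∑ i, ∑ i', ((starRingEnd ℂ) (x i) * x i') * ∑ j, (F j i * (starRingEnd ℂ) (F j i')) := by
        rw [Finset.sum_comm]
        refine Finset.sum_congr rfl fun i _ => ?_
        rw [Finset.sum_comm]
        exact Finset.sum_congr rfl fun i' _ => by rw [Finset.mul_sum]
    _ = ∑ i, ((starRingEnd ℂ) (x i) * x i) * (d : ℂ) := by
        refine Finset.sum_congr rfl fun i _ => ?_
        rw [Finset.sum_eq_single i]
        · rw [hent i i]; simp
        · intro i' _ hne
          rw [hent i i']; simp [(Ne.symm hne)]
        · simp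
    _ = (d : ℂ) * inp x x := by rw [inp, Finset.mul_sum]; exact Finset.sum_congr rfl fun i _ => by ring


lemma sic_frame {d : ℕ} (hd : 1 ≤ d) (φ : Fin (d ^ 2) → (Fin d → ℂ))
    (hφ : ∀ j, inp (φ j) (φ j) = 1)
    (hφSIC : ∀ j k, j ≠ k → ‖inp (φ j) (φ k)‖ ^ 2 = 1 / (d + 1)) :
    ∑ j, Matrix.vecMulVec (φ j) (star (φ j)) = (d : ℂ) • (1 : Matrix (Fin d) (Fin d) ℂ) := by
  have hd1 : ((d : ℂ) + 1) ≠ 0 := by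
    intro h
    have := congrArg Complex.re h
    simp only [Complex.add_re, Complex.natCast_re, Complex.one_re, Complex.zero_re] at this
    linarith
  have hd2 : (1 : ℕ) ≤ d ^ 2 := Nat.one_le_pow _ _ (by omega)
  have hcast : ((d ^ 2 - 1 : ℕ) : ℂ) = (d : ℂ) ^ 2 - 1 := by
    rw [Nat.cast_sub hd2]; push_cast; ring
  set Sent : Fin d → Fin d → ℂ := fun i i' => ∑ j, φ j i * (starRingEnd ℂ) (φ j i') with hSent
  set D : Fin d → Fin d → ℂ := fun i i' => if i = i' then (d : ℂ) else 0 with hD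
  have hDconj : ∀ i i', (starRingEnd ℂ) (D i i') = D i i' := by
    intro i i'; rw [hD]; by_cases h : i = i' <;> simp [h]
  have pair_sum : ∀ j, ∑ k, inp (φ k) (φ j) * inp (φ j) (φ k)
      = 1 + ((d ^ 2 - 1 : ℕ) : ℂ) * (1 / ((d : ℂ) + 1)) := by
    intro j
    rw [← Finset.add_sum_erase _ _ (Finset.mem_univ j), hφ j, one_mul]
    have h1 : ∀ k ∈ Finset.univ.erase j, inp (φ k) (φ j) * inp (φ j) (φ k)
        = 1 / ((d : ℂ) + 1) := by
      intro k hk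
      rw [← abs_sq_inp_cast, hφSIC k j (Finset.ne_of_mem_erase hk)]
      push_cast; ring
    rw [Finset.sum_congr rfl h1, Finset.sum_const,
      Finset.card_erase_of_mem (Finset.mem_univ j), Finset.card_univ, Fintype.card_fin,
      nsmul_eq_mul]
  have hT1 : ∑ i, ∑ i', Sent i i' * (starRingEnd ℂ) (Sent i i')
      = ((d ^ 2 : ℕ) : ℂ) * (1 + ((d ^ 2 - 1 : ℕ) : ℂ) * (1 / ((d : ℂ) + 1))) := by
    have expand : ∀ i i', Sent i i' * (starRingEnd ℂ) (Sent i i')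
        = ∑ j, ∑ k, (φ j i * (starRingEnd ℂ) (φ j i')) * ((starRingEnd ℂ) (φ k i) * φ k i') := by
      intro i i'
      rw [hSent]
      simp only [map_sum, map_mul, RingHomCompTriple.comp_apply, Complex.conj_conj,
        RingHom.id_apply]
      rw [Finset.sum_mul_sum]
    calc ∑ i, ∑ i', Sent i i' * (starRingEnd ℂ) (Sent i i')
        = ∑ i, ∑ i', ∑ j, ∑ k, (φ j i * (starRingEnd ℂ) (φ j i')) * ((starRingEnd ℂ) (φ k i) * φ k i') :=
          Finset.sum_congr rfl fun i _ => Finset.sum_congr rfl fun i' _ => expand i i'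
      _ = ∑ j, ∑ k, ∑ i, ∑ i', (φ j i * (starRingEnd ℂ) (φ j i')) * ((starRingEnd ℂ) (φ k i) * φ k i') :=
          sum_swap4 _
      _ = ∑ j, ∑ k, inp (φ k) (φ j) * inp (φ j) (φ k) := by
          refine Finset.sum_congr rfl fun j _ => Finset.sum_congr rfl fun k _ => ?_
          rw [inp, inp, Finset.sum_mul_sum]
          refine Finset.sum_congr rfl fun i _ => Finset.sum_congr rfl fun i' _ => by ring
      _ = ∑ _j : Fin (d ^ 2), (1 + ((d ^ 2 - 1 : ℕ) : ℂ) * (1 / ((d : ℂ) + 1))) :=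
          Finset.sum_congr rfl fun j _ => pair_sum j
      _ = ((d ^ 2 : ℕ) : ℂ) * (1 + ((d ^ 2 - 1 : ℕ) : ℂ) * (1 / ((d : ℂ) + 1))) := by
          rw [Finset.sum_const, Finset.card_univ, Fintype.card_fin, nsmul_eq_mul]
  have hdiag : ∑ i, Sent i i = ((d ^ 2 : ℕ) : ℂ) := by
    rw [hSent, Finset.sum_comm]
    have h1 : ∀ j, ∑ i, φ j i * (starRingEnd ℂ) (φ j i) = 1 := by
      intro j
      have h2 : ∑ i, φ j i * (starRingEnd ℂ) (φ j i) = inp (φ j) (φ j) := by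
        rw [inp]; exact Finset.sum_congr rfl fun i _ => mul_comm _ _
      rw [h2, hφ j]
    rw [Finset.sum_congr rfl fun j _ => h1 j, Finset.sum_const, Finset.card_univ,
      Fintype.card_fin, nsmul_eq_mul, mul_one]
  have key : ∑ i, ∑ i', (Sent i i' - D i i') * (starRingEnd ℂ) (Sent i i' - D i i') = 0 := by
    have expand : ∀ i i', (Sent i i' - D i i') * (starRingEnd ℂ) (Sent i i' - D i i')
        = Sent i i' * (starRingEnd ℂ) (Sent i i') - D i i' * (starRingEnd ℂ) (Sent i i')
          - Sent i i' * D i i' + D i i' * D i i' := by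
      intro i i'
      rw [map_sub, hDconj]
      ring
    rw [Finset.sum_congr rfl fun i _ => Finset.sum_congr rfl fun i' _ => expand i i']
    simp only [Finset.sum_add_distrib, Finset.sum_sub_distrib]
    rw [hT1]
    have h2 : ∑ i, ∑ i', D i i' * (starRingEnd ℂ) (Sent i i') = (d : ℂ) * ((d ^ 2 : ℕ) : ℂ) := by
      have h5 : ∀ i, ∑ i', D i i' * (starRingEnd ℂ) (Sent i i')
          = (d : ℂ) * (starRingEnd ℂ) (Sent i i) := by
        intro i
        rw [Finset.sum_eq_single i]
        · rw [hD]; simp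
        · intro b _ hb; rw [hD]; simp [Ne.symm hb]
        · intro h; exact absurd (Finset.mem_univ i) h
      rw [Finset.sum_congr rfl fun i _ => h5 i, ← Finset.mul_sum, ← map_sum, hdiag, map_natCast]
    have h3 : ∑ i, ∑ i', Sent i i' * D i i' = ((d ^ 2 : ℕ) : ℂ) * (d : ℂ) := by
      have h5 : ∀ i, ∑ i', Sent i i' * D i i' = Sent i i * (d : ℂ) := by
        intro i
        rw [Finset.sum_eq_single i]
        · rw [hD]; simp
        · intro b _ hb; rw [hD]; simp [Ne.symm hb]
        · intro h; exact absurd (Finset.mem_univ i) h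
      rw [Finset.sum_congr rfl fun i _ => h5 i, ← Finset.sum_mul, hdiag]
    have h4 : ∑ i : Fin d, ∑ i', D i i' * D i i' = (d : ℂ) * (d : ℂ) * (d : ℂ) := by
      have h5 : ∀ i, ∑ i', D i i' * D i i' = (d : ℂ) * (d : ℂ) := by
        intro i
        rw [Finset.sum_eq_single i]
        · rw [hD]; simp
        · intro b _ hb; rw [hD]; simp [Ne.symm hb]
        · intro h; exact absurd (Finset.mem_univ i) h
      rw [Finset.sum_congr rfl fun i _ => h5 i, Finset.sum_const, Finset.card_univ,
        Fintype.card_fin, nsmul_eq_mul]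
      ring
    rw [h2, h3, h4, hcast]
    push_cast
    field_simp
    ring
  have hM0 : ∀ i i', Sent i i' - D i i' = 0 := by
    have hreal : ∑ i, ∑ i', Complex.normSq (Sent i i' - D i i') = 0 := by
      have hc : ((∑ i, ∑ i', Complex.normSq (Sent i i' - D i i') : ℝ) : ℂ)
          = ∑ i, ∑ i', (Sent i i' - D i i') * (starRingEnd ℂ) (Sent i i' - D i i') := by
        push_cast
        exact Finset.sum_congr rfl fun i _ => Finset.sum_congr rfl fun i' _ =>
          (Complex.mul_conj _).symm
      rw [key] at hc
      exact_mod_cast hc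
    intro i i'
    have h1 : ∀ i ∈ (Finset.univ : Finset (Fin d)), 0 ≤ ∑ i', Complex.normSq (Sent i i' - D i i') :=
      fun i _ => Finset.sum_nonneg fun i' _ => Complex.normSq_nonneg _
    have h2 := (Finset.sum_eq_zero_iff_of_nonneg h1).mp hreal i (Finset.mem_univ i)
    have h3 := (Finset.sum_eq_zero_iff_of_nonneg
      (fun i' _ => Complex.normSq_nonneg (Sent i i' - D i i'))).mp h2 i' (Finset.mem_univ i')
    exact Complex.normSq_eq_zero.mp h3
  ext i i'
  have h := sub_eq_zero.mp (hM0 i i')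
  simp only [Matrix.sum_apply, Matrix.vecMulVec_apply, Pi.star_apply, Matrix.smul_apply,
    Matrix.one_apply, smul_eq_mul]
  rw [hSent] at h
  simp only at h
  simp only [Complex.star_def]
  rw [h, hD]
  by_cases hii : i = i' <;> simp [hii]


noncomputable def gip {ι : Type*} [Fintype ι] (f g : ι → ℂ) : ℂ :=
  ∑ i, (starRingEnd ℂ) (f i) * g i

lemma gip_conj {ι : Type*} [Fintype ι] (f g : ι → ℂ) :
    (starRingEnd ℂ) (gip f g) = gip g f := by
  simp only [gip, map_sum, map_mul, RingHomCompTriple.comp_apply, Complex.conj_conj]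
  exact Finset.sum_congr rfl fun i _ => mul_comm _ _

lemma gip_sum_smul {ι κ : Type*} [Fintype ι] [Fintype κ] (f : ι → ℂ) (c : κ → ℂ)
    (v : κ → (ι → ℂ)) : gip f (∑ k, c k • v k) = ∑ k, c k * gip f (v k) := by
  simp only [gip, Finset.sum_apply, Pi.smul_apply, smul_eq_mul, Finset.mul_sum]
  rw [Finset.sum_comm]
  exact Finset.sum_congr rfl fun k _ => Finset.sum_congr rfl fun i _ => by ring

lemma sic_design {d : ℕ} (hd : 1 ≤ d) (φ : Fin (d ^ 2) → (Fin d → ℂ))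
    (hφ : ∀ j, inp (φ j) (φ j) = 1)
    (hφSIC : ∀ j k, j ≠ k → ‖inp (φ j) (φ k)‖ ^ 2 = 1 / (d + 1))
    (x : Fin d → ℂ) (hx : inp x x = 1)
    (hb : ∑ j, ‖inp (φ j) x‖ ^ 2 = d) :
    ∑ j, (‖inp (φ j) x‖ ^ 2) ^ 2 = 2 * d / (d + 1) := by
  have hdC : ((d : ℂ) + 1) ≠ 0 := by
    intro h
    have := congrArg Complex.re h
    simp only [Complex.add_re, Complex.natCast_re, Complex.one_re, Complex.zero_re] at this
    linarith
  have hdC0 : (d : ℂ) ≠ 0 := Nat.cast_ne_zero.mpr (by omega)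
  set τ : ℂ := 1 / ((d : ℂ) + 1) with hτ
  have hτeq : (1 : ℂ) - τ = (d : ℂ) / ((d : ℂ) + 1) := by
    rw [hτ]; field_simp; ring
  have hτ1 : (1 : ℂ) - τ ≠ 0 := by
    rw [hτeq]; exact div_ne_zero hdC0 hdC
  set w : Fin (d ^ 2) → (Fin d × Fin d → ℂ) :=
    fun j p => φ j p.1 * (starRingEnd ℂ) (φ j p.2) with hw
  set u : Fin d × Fin d → ℂ := fun p => x p.1 * (starRingEnd ℂ) (x p.2) with hu
  have gexp : ∀ (a b a' b' : Fin d → ℂ),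
      gip (fun p : Fin d × Fin d => a p.1 * (starRingEnd ℂ) (a' p.2))
          (fun p : Fin d × Fin d => b p.1 * (starRingEnd ℂ) (b' p.2))
        = inp a b * (starRingEnd ℂ) (inp a' b') := by
    intro a b a' b'
    rw [gip, Fintype.sum_prod_type]
    have h1 : ∀ i : Fin d, ∑ i' : Fin d,
        (starRingEnd ℂ) (a i * (starRingEnd ℂ) (a' i')) * (b i * (starRingEnd ℂ) (b' i'))
        = ((starRingEnd ℂ) (a i) * b i) * ∑ i', a' i' * (starRingEnd ℂ) (b' i') := by
      intro i
      rw [Finset.mul_sum]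
      refine Finset.sum_congr rfl fun i' _ => ?_
      simp only [map_mul, RingHomCompTriple.comp_apply, Complex.conj_conj, RingHom.id_apply]
      ring
    rw [Finset.sum_congr rfl fun i _ => h1 i, ← Finset.sum_mul]
    have h2 : (starRingEnd ℂ) (inp a' b') = ∑ i', a' i' * (starRingEnd ℂ) (b' i') := by
      rw [inp, map_sum]
      refine Finset.sum_congr rfl fun i' _ => ?_
      simp only [map_mul, RingHomCompTriple.comp_apply, Complex.conj_conj, RingHom.id_apply]
      try ring
    rw [h2, inp]
  have gww : ∀ j k, gip (w j) (w k) = if j = k then 1 else τ := by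
    intro j k
    rw [hw]
    rw [gexp (φ j) (φ k) (φ j) (φ k)]
    by_cases h : j = k
    · rw [if_pos h, h, hφ k]; simp
    · rw [if_neg h, Complex.mul_conj, Complex.normSq_eq_norm_sq, hφSIC j k h, hτ]
      push_cast; ring
  have gwu : ∀ j, gip (w j) u = ((‖inp (φ j) x‖ ^ 2 : ℝ) : ℂ) := by
    intro j
    rw [hw, hu, gexp (φ j) x (φ j) x, Complex.mul_conj, Complex.normSq_eq_norm_sq]
  have guu : gip u u = 1 := by
    rw [hu, gexp x x x x, hx]; simp
  have hfact : (1 - τ) + ((d ^ 2 : ℕ) : ℂ) * τ = (d : ℂ) := by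
    rw [hτ]; push_cast; field_simp; ring
  have gram_expand : ∀ (g : Fin (d ^ 2) → ℂ) (j : Fin (d ^ 2)),
      ∑ k, g k * (if j = k then 1 else τ) = τ * (∑ k, g k) + (1 - τ) * g j := by
    intro g j
    have h1 : ∀ k ∈ Finset.univ, g k * (if j = k then 1 else τ)
        = τ * g k + (if k = j then (1 - τ) * g k else 0) := by
      intro k _
      by_cases h : k = j
      · subst h; rw [if_pos rfl, if_pos rfl]; ring
      · rw [if_neg (fun hh => h hh.symm), if_neg h]; ring
    rw [Finset.sum_congr rfl h1, Finset.sum_add_distrib, ← Finset.mul_sum,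
      Finset.sum_ite_eq' Finset.univ j (fun k => (1 - τ) * g k), if_pos (Finset.mem_univ j)]
  have hli : LinearIndependent ℂ w := by
    rw [Fintype.linearIndependent_iff]
    intro g hg
    have key : ∀ j, τ * (∑ k, g k) + (1 - τ) * g j = 0 := by
      intro j
      have h0 : gip (w j) (∑ k, g k • w k) = 0 := by rw [hg]; simp [gip]
      rw [gip_sum_smul] at h0
      rw [Finset.sum_congr rfl fun k _ => by rw [gww j k]] at h0
      rw [← gram_expand g j]
      exact h0
    have hsum0 : (∑ k, g k) = 0 := by
      have h2 : ∑ j, (τ * (∑ k, g k) + (1 - τ) * g j) = 0 :=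
        Finset.sum_eq_zero fun j _ => key j
      rw [Finset.sum_add_distrib, Finset.sum_const, ← Finset.mul_sum, Finset.card_univ,
        Fintype.card_fin, nsmul_eq_mul] at h2
      have h3 : (d : ℂ) * (∑ k, g k) = 0 := by
        linear_combination h2 - (∑ k, g k) * hfact
      exact (mul_eq_zero.mp h3).resolve_left hdC0
    intro j
    have h4 := key j
    rw [hsum0, mul_zero, zero_add] at h4
    exact (mul_eq_zero.mp h4).resolve_left hτ1
  haveI : Nonempty (Fin (d ^ 2)) := ⟨⟨0, Nat.one_le_pow _ _ (by omega)⟩⟩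
  have hcard : Fintype.card (Fin (d ^ 2)) = Module.finrank ℂ (Fin d × Fin d → ℂ) := by
    rw [Module.finrank_pi, Fintype.card_fin, Fintype.card_prod, Fintype.card_fin]
    ring
  let B := basisOfLinearIndependentOfCardEqFinrank hli hcard
  have hB : ⇑B = w := coe_basisOfLinearIndependentOfCardEqFinrank hli hcard
  set c : Fin (d ^ 2) → ℂ := fun j => B.repr u j with hc
  have hrep : ∑ k, c k • w k = u := by
    conv_rhs => rw [← B.sum_repr u]
    exact Finset.sum_congr rfl fun k _ => by rw [hB, hc]
  -- R1
  have R1 : ∀ j, ((‖inp (φ j) x‖ ^ 2 : ℝ) : ℂ) = τ * (∑ k, c k) + (1 - τ) * c j := by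
    intro j
    rw [← gwu j, ← hrep, gip_sum_smul,
      Finset.sum_congr rfl fun k _ => by rw [gww j k], gram_expand c j]
  -- R2 : sum of coefficients is one
  have R2 : (∑ k, c k) = 1 := by
    have h1 : ∑ j, ((‖inp (φ j) x‖ ^ 2 : ℝ) : ℂ) = (d : ℂ) := by
      rw [← Complex.ofReal_sum, hb]; norm_cast
    rw [Finset.sum_congr rfl fun j _ => R1 j, Finset.sum_add_distrib, Finset.sum_const,
      ← Finset.mul_sum, Finset.card_univ, Fintype.card_fin, nsmul_eq_mul] at h1
    have h3 : (d : ℂ) * (∑ k, c k) = (d : ℂ) * 1 := by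
      rw [mul_one]
      linear_combination h1 - (∑ k, c k) * hfact
    exact mul_left_cancel₀ hdC0 h3
  -- R3 : sum of squares of coefficients is one
  have R3 : (∑ k, c k ^ 2) = 1 := by
    have h1 : (1 : ℂ) = ∑ k, c k * ((‖inp (φ k) x‖ ^ 2 : ℝ) : ℂ) := by
      rw [← guu]
      nth_rewrite 2 [← hrep]
      rw [gip_sum_smul]
      refine Finset.sum_congr rfl fun k _ => ?_
      rw [← gip_conj (w k) u, gwu k, Complex.conj_ofReal]
    have h2 : ∑ k, c k * ((‖inp (φ k) x‖ ^ 2 : ℝ) : ℂ)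
        = τ * (∑ k, c k) + (1 - τ) * (∑ k, c k ^ 2) := by
      rw [Finset.sum_congr rfl fun k _ => by rw [R1 k, R2]]
      rw [Finset.sum_congr rfl (fun k _ => show c k * (τ * 1 + (1 - τ) * c k)
        = τ * c k + (1 - τ) * c k ^ 2 from by ring)]
      rw [Finset.sum_add_distrib, ← Finset.mul_sum, ← Finset.mul_sum, R2]
    have h3 : (1 - τ) * (∑ k, c k ^ 2) = (1 - τ) * 1 := by
      rw [mul_one]; linear_combination -h1 - h2 - τ * R2
    exact mul_left_cancel₀ hτ1 h3
  -- final computation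
  have final : ((∑ j, (‖inp (φ j) x‖ ^ 2) ^ 2 : ℝ) : ℂ)
      = (1 - τ) ^ 2 + 2 * τ * (1 - τ) + ((d ^ 2 : ℕ) : ℂ) * τ ^ 2 := by
    rw [Complex.ofReal_sum]
    have h1 : ∀ j, ((‖inp (φ j) x‖ ^ 2) ^ 2 : ℂ)
        = (τ * 1 + (1 - τ) * c j) ^ 2 := by
      intro j
      have := R1 j
      rw [R2] at this
      rw [← this]
      norm_cast
    calc ∑ j, (((‖inp (φ j) x‖ ^ 2) ^ 2 : ℝ) : ℂ)
        = ∑ j, (τ * 1 + (1 - τ) * c j) ^ 2 := by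
          refine Finset.sum_congr rfl fun j _ => ?_
          rw [← h1 j]
          norm_cast
      _ = ∑ j, (τ ^ 2 + 2 * τ * (1 - τ) * c j + (1 - τ) ^ 2 * c j ^ 2) := by
          refine Finset.sum_congr rfl fun j _ => by ring
      _ = ((d ^ 2 : ℕ) : ℂ) * τ ^ 2 + 2 * τ * (1 - τ) * (∑ j, c j)
            + (1 - τ) ^ 2 * (∑ j, c j ^ 2) := by
          rw [Finset.sum_add_distrib, Finset.sum_add_distrib, Finset.sum_const,
            ← Finset.mul_sum, ← Finset.mul_sum, Finset.card_univ, Fintype.card_fin, nsmul_eq_mul]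
      _ = (1 - τ) ^ 2 + 2 * τ * (1 - τ) + ((d ^ 2 : ℕ) : ℂ) * τ ^ 2 := by
          rw [R2, R3]; ring
  have hrhs : ((1 - τ) ^ 2 + 2 * τ * (1 - τ) + ((d ^ 2 : ℕ) : ℂ) * τ ^ 2)
      = ((2 * d / (d + 1) : ℝ) : ℂ) := by
    rw [hτ]; push_cast; field_simp; ring
  rw [hrhs] at final
  exact_mod_cast final


lemma log_lt_half_sub_inv {u : ℝ} (hu : 1 < u) : Real.log u < (u - u⁻¹) / 2 := by
  set g : ℝ → ℝ := fun v => (v - v⁻¹) / 2 - Real.log v with hg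
  have hmono : StrictMonoOn g (Set.Ici 1) := by
    apply strictMonoOn_of_deriv_pos (convex_Ici 1)
    · apply ContinuousOn.sub
      · exact (continuousOn_id.sub (continuousOn_inv₀.mono (by
          intro v hv
          simp only [Set.mem_Ici] at hv
          simp only [Set.mem_compl_iff, Set.mem_singleton_iff]
          linarith))).div_const 2
      · exact Real.continuousOn_log.mono (by
          intro v hv
          simp only [Set.mem_Ici] at hv
          simp only [Set.mem_compl_iff, Set.mem_singleton_iff]
          intro h; rw [h] at hv; linarith)
    · intro v hv
      rw [interior_Ici] at hv
      simp only [Set.mem_Ioi] at hv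
      have hv0 : v ≠ 0 := by linarith
      have hder : HasDerivAt g ((1 - -(v ^ 2)⁻¹) / 2 - v⁻¹) v := by
        exact (((hasDerivAt_id v).sub (hasDerivAt_inv hv0)).div_const 2).sub
          (Real.hasDerivAt_log hv0)
      rw [hder.deriv]
      have hv2 : (0 : ℝ) < v ^ 2 := by positivity
      rw [div_sub' (two_ne_zero)]
      apply div_pos _ two_pos
      have h1 : (1 - -(v ^ 2)⁻¹) - 2 * v⁻¹ = (1 - v⁻¹) ^ 2 + (v^2)⁻¹ - (v⁻¹)^2 := by ring
      have h2 : ((v : ℝ)^2)⁻¹ = (v⁻¹)^2 := by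
        rw [← inv_pow]
      rw [h1, h2]
      have h3 : (0 : ℝ) < (1 - v⁻¹) ^ 2 := by
        have h4 : v⁻¹ < 1 := by
          rw [inv_lt_one_iff₀]
          right; exact hv
        have h5 : 1 - v⁻¹ > 0 := by linarith
        positivity
      linarith
  have h0 : g 1 = 0 := by simp [hg]
  have := hmono (Set.mem_Ici.mpr le_rfl) (Set.mem_Ici.mpr (le_of_lt hu)) hu
  rw [h0] at this
  simp only [hg] at this
  linarith


lemma opt_lemma (d : ℕ) (hd : 1 ≤ d) (b : Fin (d ^ 2) → ℝ)
    (h0 : ∀ i, 0 ≤ b i) (h1 : ∀ i, b i ≤ 1)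
    (hs : ∑ i, b i = d)
    (hs2 : ∑ i, (b i) ^ 2 = 2 * d / (d + 1)) :
    ∏ i, b i ≤ (1 / ((d : ℝ) + 1)) ^ (d ^ 2 - 1) ∧
      (∏ i, b i = (1 / ((d : ℝ) + 1)) ^ (d ^ 2 - 1) →
        ∀ i, b i = 1 / ((d : ℝ) + 1) ∨ b i = 1) := by
  have hD1 : (1 : ℝ) ≤ (d : ℝ) := by exact_mod_cast hd
  set D : ℝ := (d : ℝ) with hD_def
  have hDpos : 0 < D := by linarith
  have hDne : D ≠ 0 := ne_of_gt hDpos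
  have hupos : 0 < D + 1 := by linarith
  have hune : D + 1 ≠ 0 := ne_of_gt hupos
  have hu1 : 1 < D + 1 := by linarith
  set L : ℝ := Real.log (D + 1) with hL_def
  have hLpos : 0 < L := Real.log_pos hu1
  have hL1 : L < D := by
    have h := Real.log_lt_sub_one_of_pos hupos (by linarith)
    rw [← hL_def] at h
    linarith
  set C : ℝ := (D + 1) ^ 2 * (L - D) / D ^ 2 with hC_def
  set B : ℝ := (D + 1) - 2 * C / (D + 1) with hB_def
  set A : ℝ := -(B + C) with hA_def
  set t : ℝ := (D + 1)⁻¹ with ht_def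
  have htpos : 0 < t := by rw [ht_def]; positivity
  have ht1 : t < 1 := by
    rw [ht_def, inv_lt_one_iff₀]; right; exact hu1
  have hCneg : C < 0 := by
    rw [hC_def]
    apply div_neg_of_neg_of_pos
    · apply mul_neg_of_pos_of_neg (by positivity)
      linarith
    · positivity
  have hCne : C ≠ 0 := ne_of_lt hCneg
  have hC2 : C < -(D + 1) / 2 := by
    have hlog := log_lt_half_sub_inv hu1
    rw [← hL_def] at hlog
    have h1 : (D + 1) * L < ((D + 1) ^ 2 - 1) / 2 := by
      have h2 := mul_lt_mul_of_pos_left hlog hupos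
      have h3 : (D + 1) * ((D + 1 - (D + 1)⁻¹) / 2) = ((D + 1) ^ 2 - 1) / 2 := by
        field_simp
      rw [h3] at h2
      exact h2
    rw [hC_def, div_lt_div_iff₀ (by positivity : (0:ℝ) < D ^ 2) (two_pos)]
    nlinarith [mul_lt_mul_of_pos_left h1 hupos]
  have hC3 : -(D + 1) ^ 2 / 2 < C := by
    have hlow : D - D ^ 2 / 2 < L := by
      by_cases hD2 : (2 : ℝ) ≤ D
      · nlinarith [mul_nonneg (by linarith : (0:ℝ) ≤ D - 2) (le_of_lt hDpos)]
      · push_neg at hD2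
        have hd1 : d = 1 := by
          have h2 : (d : ℝ) < 2 := by rw [← hD_def]; exact hD2
          have h3 : d < 2 := by exact_mod_cast h2
          omega
        have hDeq : D = 1 := by rw [hD_def, hd1]; norm_num
        rw [hDeq, hL_def, hDeq]
        have h4 : (1 : ℝ) + 1 = 2 := by norm_num
        rw [h4]
        have := Real.log_two_gt_d9
        norm_num
        linarith
    rw [hC_def, lt_div_iff₀ (by positivity : (0:ℝ) < D ^ 2)]
    nlinarith [mul_pos (pow_pos hupos 2) (show (0:ℝ) < L - D + D ^ 2 / 2 by linarith)]
  have hneg2C : 0 < -(2 * C) := by linarith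
  set r : ℝ := (D + 1) / (-(2 * C)) with hr_def
  have hrpos : 0 < r := div_pos hupos hneg2C
  have htr : t < r := by
    rw [ht_def, hr_def, inv_eq_one_div, div_lt_div_iff₀ hupos hneg2C]
    nlinarith
  have hr1 : r < 1 := by
    rw [hr_def, div_lt_one hneg2C]
    linarith
  -- the quadratic-log function
  set f : ℝ → ℝ := fun y => A + B * y + C * y ^ 2 - Real.log y with hf_def
  have hf1 : f 1 = 0 := by
    rw [hf_def]
    simp only [Real.log_one, mul_one, one_pow]
    rw [hA_def]; ring
  have hlogt : Real.log t = -L := by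
    rw [ht_def, Real.log_inv, ← hL_def]
  have hft : f t = 0 := by
    rw [hf_def]
    simp only
    rw [hlogt, hA_def, hB_def, hC_def, ht_def]
    field_simp
    ring
  -- derivative
  have hderiv : ∀ y : ℝ, 0 < y → HasDerivAt f (B + C * (2 * y) - y⁻¹) y := by
    intro y hy
    have h := (((hasDerivAt_const y A).add ((hasDerivAt_id y).const_mul B)).add
      ((hasDerivAt_pow 2 y).const_mul C)).sub (Real.hasDerivAt_log (ne_of_gt hy))
    exact h.congr_deriv (by norm_num)
  have hderiv_eq : ∀ y : ℝ, 0 < y →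
      B + C * (2 * y) - y⁻¹ = 2 * C * (y - t) * (y - r) / y := by
    intro y hy
    rw [hB_def, ht_def, hr_def]
    field_simp
    ring
  have hcont : ContinuousOn f (Set.Ioi (0 : ℝ)) := by
    rw [hf_def]
    apply ContinuousOn.sub
    · exact (by continuity : Continuous fun y : ℝ => A + B * y + C * y ^ 2).continuousOn
    · exact Real.continuousOn_log.mono (by
        intro y hy
        simp only [Set.mem_Ioi] at hy
        simp only [Set.mem_compl_iff, Set.mem_singleton_iff]
        exact ne_of_gt hy)
  have hderiv_neg : ∀ y : ℝ, 0 < y → ((y < t ∧ y < r) ∨ (t < y ∧ r < y)) → deriv f y < 0 := by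
    intro y hy hcase
    rw [(hderiv y hy).deriv, hderiv_eq y hy]
    rcases hcase with ⟨h1, h2⟩ | ⟨h1, h2⟩
    · apply div_neg_of_neg_of_pos _ hy
      have : 0 < (2 * C) * (y - t) := mul_pos_of_neg_of_neg (by linarith) (by linarith)
      exact mul_neg_of_pos_of_neg this (by linarith)
    · apply div_neg_of_neg_of_pos _ hy
      have : (2 * C) * (y - t) < 0 := mul_neg_of_neg_of_pos (by linarith) (by linarith)
      exact mul_neg_of_neg_of_pos this (by linarith)
  have hderiv_pos : ∀ y : ℝ, 0 < y → t < y → y < r → 0 < deriv f y := by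
    intro y hy h1 h2
    rw [(hderiv y hy).deriv, hderiv_eq y hy]
    apply div_pos _ hy
    have h3 : (2 * C) * (y - t) < 0 := mul_neg_of_neg_of_pos (by linarith) (by linarith)
    exact mul_pos_of_neg_of_neg h3 (by linarith)
  have anti1 : StrictAntiOn f (Set.Ioc 0 t) := by
    apply strictAntiOn_of_deriv_neg (convex_Ioc 0 t)
    · exact hcont.mono (fun y hy => Set.mem_Ioi.mpr hy.1)
    · intro y hy
      rw [interior_Ioc] at hy
      exact hderiv_neg y hy.1 (Or.inl ⟨hy.2, lt_trans hy.2 htr⟩)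
  have mono2 : StrictMonoOn f (Set.Icc t r) := by
    apply strictMonoOn_of_deriv_pos (convex_Icc t r)
    · exact hcont.mono (fun y hy => Set.mem_Ioi.mpr (lt_of_lt_of_le htpos hy.1))
    · intro y hy
      rw [interior_Icc] at hy
      exact hderiv_pos y (lt_trans htpos hy.1) hy.1 hy.2
  have anti3 : StrictAntiOn f (Set.Icc r 1) := by
    apply strictAntiOn_of_deriv_neg (convex_Icc r 1)
    · exact hcont.mono (fun y hy => Set.mem_Ioi.mpr (lt_of_lt_of_le hrpos hy.1))
    · intro y hy
      rw [interior_Icc] at hy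
      exact hderiv_neg y (lt_trans hrpos hy.1) (Or.inr ⟨lt_trans htr hy.1, hy.1⟩)
  -- pointwise nonnegativity with equality cases
  have hfpos : ∀ y : ℝ, 0 < y → y ≤ 1 → y ≠ t → y ≠ 1 → 0 < f y := by
    intro y hy hy1 hyt hyne1
    rcases lt_trichotomy y t with h | h | h
    · have := anti1 (Set.mem_Ioc.mpr ⟨hy, le_of_lt h⟩) (Set.mem_Ioc.mpr ⟨htpos, le_rfl⟩) h
      rw [hft] at this
      linarith
    · exact absurd h hyt
    · by_cases hyr : y ≤ r
      · have := mono2 (Set.mem_Icc.mpr ⟨le_rfl, le_of_lt htr⟩)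
          (Set.mem_Icc.mpr ⟨le_of_lt h, hyr⟩) h
        rw [hft] at this
        linarith
      · push_neg at hyr
        have hylt1 : y < 1 := lt_of_le_of_ne hy1 hyne1
        have := anti3 (Set.mem_Icc.mpr ⟨le_of_lt hyr, hy1⟩)
          (Set.mem_Icc.mpr ⟨le_of_lt hr1, le_rfl⟩) hylt1
        rw [hf1] at this
        linarith
  have hfnonneg : ∀ y : ℝ, 0 < y → y ≤ 1 → 0 ≤ f y := by
    intro y hy hy1
    by_cases h : y = t
    · rw [h, hft]
    · by_cases h2 : y = 1
      · rw [h2, hf1]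
      · exact le_of_lt (hfpos y hy hy1 h h2)
  -- cast identities
  have hn1 : (1 : ℕ) ≤ d ^ 2 := Nat.one_le_pow _ _ (by omega)
  have hc1 : ((d ^ 2 - 1 : ℕ) : ℝ) = D ^ 2 - 1 := by
    rw [Nat.cast_sub hn1, hD_def]; push_cast; ring
  have hc2 : ((d ^ 2 : ℕ) : ℝ) = D ^ 2 := by rw [hD_def]; push_cast; ring
  -- key constant identity
  have e1 : A + B + C = 0 := by rw [hA_def]; ring
  have e2 : A + B * t + C * t ^ 2 = -L := by
    have := hft
    rw [hf_def] at this
    simp only at this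
    rw [hlogt] at this
    linarith
  have hkey : ((d ^ 2 : ℕ) : ℝ) * A + B * D + C * (2 * D / (D + 1))
      = ((d ^ 2 - 1 : ℕ) : ℝ) * Real.log t := by
    rw [hc1, hc2, hlogt]
    rw [hA_def, hB_def, hC_def]
    field_simp
    ring
  -- main dichotomy
  have hpow_pos : (0 : ℝ) < (1 / (D + 1)) ^ (d ^ 2 - 1) := by positivity
  by_cases hz : ∃ i, b i = 0
  · obtain ⟨i0, hi0⟩ := hz
    have hprod0 : ∏ i, b i = 0 := Finset.prod_eq_zero (Finset.mem_univ i0) hi0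
    constructor
    · rw [hprod0]; exact le_of_lt hpow_pos
    · intro heq
      rw [hprod0] at heq
      exact absurd heq.symm (ne_of_gt hpow_pos)
  · push_neg at hz
    have hbpos : ∀ i, 0 < b i := fun i => lt_of_le_of_ne (h0 i) (Ne.symm (hz i))
    have hbne : ∀ i ∈ Finset.univ, b i ≠ (0:ℝ) := fun i _ => hz i
    have hsumf : ∑ i, f (b i)
        = ((d ^ 2 : ℕ) : ℝ) * A + B * (∑ i, b i) + C * (∑ i, (b i) ^ 2)
          - ∑ i, Real.log (b i) := by
      rw [hf_def]
      simp only
      rw [Finset.sum_sub_distrib, Finset.sum_add_distrib, Finset.sum_add_distrib,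
        Finset.sum_const, ← Finset.mul_sum, ← Finset.mul_sum, Finset.card_univ,
        Fintype.card_fin, nsmul_eq_mul]
    rw [hs, hs2] at hsumf
    have hsum_nonneg : 0 ≤ ∑ i, f (b i) :=
      Finset.sum_nonneg fun i _ => hfnonneg (b i) (hbpos i) (h1 i)
    have hlog_prod : Real.log (∏ i, b i) = ∑ i, Real.log (b i) :=
      Real.log_prod hbne
    have hlog_pow : Real.log ((1 / (D + 1)) ^ (d ^ 2 - 1))
        = ((d ^ 2 - 1 : ℕ) : ℝ) * Real.log t := by
      rw [Real.log_pow, ht_def, one_div]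
    have hprodpos : 0 < ∏ i, b i := Finset.prod_pos fun i _ => hbpos i
    constructor
    · rw [← Real.log_le_log_iff hprodpos hpow_pos, hlog_prod, hlog_pow, ← hkey]
      linarith [hsumf]
    · intro heq i
      have hlogeq : ∑ i, Real.log (b i) = ((d ^ 2 - 1 : ℕ) : ℝ) * Real.log t := by
        rw [← hlog_prod, heq, hlog_pow]
      have hsumf0 : ∑ i, f (b i) = 0 := by
        rw [hsumf, hlogeq, hkey]; ring
      have hall := (Finset.sum_eq_zero_iff_of_nonneg
        (fun i _ => hfnonneg (b i) (hbpos i) (h1 i))).mp hsumf0 i (Finset.mem_univ i)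
      by_cases h : b i = t
      · left; rw [h, ht_def, one_div]
      · by_cases h2 : b i = 1
        · right; exact h2
        · exact absurd hall (ne_of_gt (hfpos (b i) (hbpos i) (h1 i) h h2))


noncomputable def toE {d : ℕ} (x : Fin d → ℂ) : EuclideanSpace ℂ (Fin d) :=
  (WithLp.equiv 2 (Fin d → ℂ)).symm x

lemma inp_eq_inner {d : ℕ} (x y : Fin d → ℂ) :
    inp x y = @inner ℂ (EuclideanSpace ℂ (Fin d)) _ (toE x) (toE y) := by
  rw [PiLp.inner_apply]
  simp [inp, toE, RCLike.inner_apply]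
  exact Finset.sum_congr rfl fun i _ => mul_comm _ _

lemma norm_of_unit {d : ℕ} (x : Fin d → ℂ) (hx : inp x x = 1) :
    ‖toE x‖ = 1 := by
  have h := inner_self_eq_norm_sq_to_K (𝕜 := ℂ) (toE x)
  rw [← inp_eq_inner, hx] at h
  have h2 : (1 : ℝ) = ‖toE x‖ ^ 2 := by
    have h3 : ((1 : ℝ) : ℂ) = (((‖toE x‖ ^ 2 : ℝ)) : ℂ) := by push_cast; exact h
    exact_mod_cast h3
  nlinarith [norm_nonneg (toE x)]

lemma abs_inp_le_one {d : ℕ} (x y : Fin d → ℂ) (hx : inp x x = 1) (hy : inp y y = 1) :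
    ‖inp x y‖ ≤ 1 := by
  rw [inp_eq_inner]
  calc ‖@inner ℂ (EuclideanSpace ℂ (Fin d)) _ (toE x) (toE y)‖
      ≤ ‖toE x‖ * ‖toE y‖ := norm_inner_le_norm _ _
    _ = 1 := by rw [norm_of_unit x hx, norm_of_unit y hy]; norm_num

lemma inp_smul_smul {d : ℕ} (a b : ℂ) (x y : Fin d → ℂ) :
    inp (a • x) (b • y) = (starRingEnd ℂ) a * b * inp x y := by
  simp only [inp, Pi.smul_apply, smul_eq_mul, map_mul, Finset.mul_sum]
  exact Finset.sum_congr rfl fun i _ => by ring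

lemma exists_smul_of_abs_sq_one {d : ℕ} (x y : Fin d → ℂ) (hx : inp x x = 1)
    (hy : inp y y = 1) (h : ‖inp x y‖ ^ 2 = 1) :
    ∃ r : ℂ, ‖r‖ = 1 ∧ y = r • x := by
  have habs : ‖inp x y‖ = 1 := by
    nlinarith [norm_nonneg (inp x y)]
  have hx0 : toE x ≠ 0 := by
    intro h0
    have h1 : inp x x = 0 := by
      rw [inp_eq_inner, h0, inner_zero_left]
    rw [hx] at h1
    exact one_ne_zero h1
  have hy0 : toE y ≠ 0 := by
    intro h0
    have h1 : inp y y = 0 := by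
      rw [inp_eq_inner, h0, inner_zero_left]
    rw [hy] at h1
    exact one_ne_zero h1
  have heq : ‖@inner ℂ (EuclideanSpace ℂ (Fin d)) _ (toE x) (toE y)‖ = ‖toE x‖ * ‖toE y‖ := by
    rw [norm_of_unit x hx, norm_of_unit y hy, ← inp_eq_inner, habs]
    norm_num
  obtain ⟨r, hr0, hry⟩ := (norm_inner_eq_norm_iff hx0 hy0).mp heq
  have hry' : y = r • x := by
    funext i
    have := congrFun (congrArg (WithLp.equiv 2 (Fin d → ℂ)) hry) i
    simpa [toE] using this
  refine ⟨r, ?_, hry'⟩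
  have h1 : inp y y = (starRingEnd ℂ) r * r * inp x x := by
    conv_lhs => rw [hry']
    exact inp_smul_smul r r x x
  rw [hx, hy, mul_one] at h1
  have h2 : ((Complex.normSq r : ℝ) : ℂ) = 1 := by
    rw [← Complex.mul_conj]
    linear_combination -h1
  have h3 : Complex.normSq r = 1 := by exact_mod_cast h2
  have h4 : ‖r‖ ^ 2 = 1 := by rw [Complex.sq_norm, h3]
  nlinarith [norm_nonneg r]

lemma frame_sum_real {d m : ℕ} (F : Fin m → (Fin d → ℂ))
    (hF : ∑ j, Matrix.vecMulVec (F j) (star (F j)) = (d : ℂ) • (1 : Matrix (Fin d) (Fin d) ℂ))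
    (x : Fin d → ℂ) (hx : inp x x = 1) :
    ∑ j, ‖inp x (F j)‖ ^ 2 = d := by
  have h := frame_sum F hF x
  rw [hx, mul_one] at h
  have h2 : ((∑ j, ‖inp x (F j)‖ ^ 2 : ℝ) : ℂ) = (d : ℂ) := by
    rw [Complex.ofReal_sum]
    rw [Finset.sum_congr rfl fun j _ => abs_sq_inp_cast x (F j)]
    exact h
  exact_mod_cast h2

lemma abs_inp_comm {d : ℕ} (x y : Fin d → ℂ) :
    ‖inp x y‖ = ‖inp y x‖ := by
  rw [← conj_inp, Complex.norm_conj]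



set_option maxHeartbeats 1000000 in
theorem stmt17 (d : ℕ) (hd : 1 ≤ d)
    (ψ : Fin (d ^ 2) → (Fin d → ℂ)) (hψ : ∀ j, inp (ψ j) (ψ j) = 1)
    (hcomp : ∑ j, Matrix.vecMulVec (ψ j) (star (ψ j))
      = (d : ℂ) • (1 : Matrix (Fin d) (Fin d) ℂ))
    (φ : Fin (d ^ 2) → (Fin d → ℂ)) (hφ : ∀ j, inp (φ j) (φ j) = 1)
    (hφSIC : ∀ j k, j ≠ k →
      ‖inp (φ j) (φ k)‖ ^ 2 = 1 / (d + 1))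
    (hprod : ∀ j, ∏ k, ‖inp (φ j) (ψ k)‖ ^ 2
      = (1 / ((d : ℝ) + 1)) ^ (d ^ 2 - 1)) :
    ∀ j k, j ≠ k → ‖inp (ψ j) (ψ k)‖ ^ 2 = 1 / (d + 1) := by
  have hDpos : (0 : ℝ) < d := by exact_mod_cast Nat.lt_of_lt_of_le Nat.zero_lt_one hd
  have hupos : (0 : ℝ) < (d : ℝ) + 1 := by linarith
  have htpos : (0 : ℝ) < 1 / ((d : ℝ) + 1) := by positivity
  have ht1 : (1 : ℝ) / ((d : ℝ) + 1) < 1 := by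
    rw [div_lt_one hupos]; linarith
  have hn1 : (1 : ℕ) ≤ d ^ 2 := Nat.one_le_pow _ _ (by omega)
  have hφframe := sic_frame hd φ hφ hφSIC
  -- column sums and square sums
  have hcol : ∀ k, ∑ j, ‖inp (φ j) (ψ k)‖ ^ 2 = d := by
    intro k
    have h := frame_sum_real φ hφframe (ψ k) (hψ k)
    rw [← h]
    exact Finset.sum_congr rfl fun j _ => by rw [abs_inp_comm]
  have hcol2 : ∀ k, ∑ j, (‖inp (φ j) (ψ k)‖ ^ 2) ^ 2 = 2 * d / (d + 1) :=
    fun k => sic_design hd φ hφ hφSIC (ψ k) (hψ k) (hcol k)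
  have h0 : ∀ j k, 0 ≤ ‖inp (φ j) (ψ k)‖ ^ 2 := fun j k => by positivity
  have h1 : ∀ j k, ‖inp (φ j) (ψ k)‖ ^ 2 ≤ 1 := by
    intro j k
    have := abs_inp_le_one (φ j) (ψ k) (hφ j) (hψ k)
    nlinarith [norm_nonneg (inp (φ j) (ψ k))]
  have hcpos : (0 : ℝ) < (1 / ((d : ℝ) + 1)) ^ (d ^ 2 - 1) := by positivity
  have hopt : ∀ k, (∏ j, ‖inp (φ j) (ψ k)‖ ^ 2
        ≤ (1 / ((d : ℝ) + 1)) ^ (d ^ 2 - 1)) ∧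
      ((∏ j, ‖inp (φ j) (ψ k)‖ ^ 2 = (1 / ((d : ℝ) + 1)) ^ (d ^ 2 - 1)) →
        ∀ j, ‖inp (φ j) (ψ k)‖ ^ 2 = 1 / ((d : ℝ) + 1)
          ∨ ‖inp (φ j) (ψ k)‖ ^ 2 = 1) :=
    fun k => opt_lemma d hd (fun j => ‖inp (φ j) (ψ k)‖ ^ 2)
      (fun j => h0 j k) (fun j => h1 j k) (hcol k) (hcol2 k)
  -- total product
  have htot : ∏ k, ∏ j, ‖inp (φ j) (ψ k)‖ ^ 2
      = ((1 / ((d : ℝ) + 1)) ^ (d ^ 2 - 1)) ^ (d ^ 2) := by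
    rw [Finset.prod_comm]
    rw [Finset.prod_congr rfl fun j _ => hprod j, Finset.prod_const, Finset.card_univ,
      Fintype.card_fin]
  -- each column product achieves the maximum
  have hcol_eq : ∀ k, ∏ j, ‖inp (φ j) (ψ k)‖ ^ 2
      = (1 / ((d : ℝ) + 1)) ^ (d ^ 2 - 1) := by
    intro k
    by_contra hne
    have hlt : ∏ j, ‖inp (φ j) (ψ k)‖ ^ 2
        < (1 / ((d : ℝ) + 1)) ^ (d ^ 2 - 1) := lt_of_le_of_ne (hopt k).1 hne
    have hprodnn : ∀ k', (0:ℝ) ≤ ∏ j, ‖inp (φ j) (ψ k')‖ ^ 2 :=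
      fun k' => Finset.prod_nonneg fun j _ => h0 j k'
    have herase : ∏ k' ∈ Finset.univ.erase k, (∏ j, ‖inp (φ j) (ψ k')‖ ^ 2)
        ≤ ((1 / ((d : ℝ) + 1)) ^ (d ^ 2 - 1)) ^ (d ^ 2 - 1) := by
      calc ∏ k' ∈ Finset.univ.erase k, (∏ j, ‖inp (φ j) (ψ k')‖ ^ 2)
          ≤ ∏ k' ∈ Finset.univ.erase k, (1 / ((d : ℝ) + 1)) ^ (d ^ 2 - 1) :=
            Finset.prod_le_prod (fun k' _ => hprodnn k') (fun k' _ => (hopt k').1)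
        _ = ((1 / ((d : ℝ) + 1)) ^ (d ^ 2 - 1)) ^ (d ^ 2 - 1) := by
            rw [Finset.prod_const, Finset.card_erase_of_mem (Finset.mem_univ k),
              Finset.card_univ, Fintype.card_fin]
    have h2 : ∏ k', ∏ j, ‖inp (φ j) (ψ k')‖ ^ 2
        < ((1 / ((d : ℝ) + 1)) ^ (d ^ 2 - 1)) * ((1 / ((d : ℝ) + 1)) ^ (d ^ 2 - 1)) ^ (d ^ 2 - 1) := by
      rw [← Finset.mul_prod_erase Finset.univ _ (Finset.mem_univ k)]
      calc (∏ j, ‖inp (φ j) (ψ k)‖ ^ 2)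
            * ∏ k' ∈ Finset.univ.erase k, (∏ j, ‖inp (φ j) (ψ k')‖ ^ 2)
          ≤ (∏ j, ‖inp (φ j) (ψ k)‖ ^ 2)
            * ((1 / ((d : ℝ) + 1)) ^ (d ^ 2 - 1)) ^ (d ^ 2 - 1) :=
            mul_le_mul_of_nonneg_left herase (hprodnn k)
        _ < ((1 / ((d : ℝ) + 1)) ^ (d ^ 2 - 1))
            * ((1 / ((d : ℝ) + 1)) ^ (d ^ 2 - 1)) ^ (d ^ 2 - 1) :=
            mul_lt_mul_of_pos_right hlt (by positivity)
    rw [htot] at h2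
    have h3 : ((1 / ((d : ℝ) + 1)) ^ (d ^ 2 - 1)) ^ (d ^ 2)
        = ((1 / ((d : ℝ) + 1)) ^ (d ^ 2 - 1))
          * ((1 / ((d : ℝ) + 1)) ^ (d ^ 2 - 1)) ^ (d ^ 2 - 1) := by
      rw [← pow_succ']
      congr 1
      omega
    rw [h3] at h2
    exact lt_irrefl _ h2
  have hdichot : ∀ k j, ‖inp (φ j) (ψ k)‖ ^ 2 = 1 / ((d : ℝ) + 1)
      ∨ ‖inp (φ j) (ψ k)‖ ^ 2 = 1 :=
    fun k => (hopt k).2 (hcol_eq k)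
  -- existence of the "one" index per column
  have hex1 : ∀ k, ∃ j, ‖inp (φ j) (ψ k)‖ ^ 2 = 1 := by
    intro k
    by_contra h
    push_neg at h
    have hall : ∀ j, ‖inp (φ j) (ψ k)‖ ^ 2 = 1 / ((d : ℝ) + 1) :=
      fun j => (hdichot k j).resolve_right (h j)
    have hsum := hcol k
    rw [Finset.sum_congr rfl fun j _ => hall j, Finset.sum_const, Finset.card_univ,
      Fintype.card_fin, nsmul_eq_mul] at hsum
    -- (d^2) * (1/(d+1)) = d  is impossible
    have : ((d ^ 2 : ℕ) : ℝ) = (d : ℝ) * ((d : ℝ) + 1) := by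
      field_simp at hsum
      linarith [hsum]
    push_cast at this
    nlinarith
  choose σ hσ using hex1
  -- all other entries in a column are 1/(d+1)
  have huniq : ∀ k j, j ≠ σ k → ‖inp (φ j) (ψ k)‖ ^ 2 = 1 / ((d : ℝ) + 1) := by
    intro k j hne
    rcases hdichot k j with h | h
    · exact h
    · exfalso
      have hge : ∀ i, 1 / ((d : ℝ) + 1) ≤ ‖inp (φ i) (ψ k)‖ ^ 2 := by
        intro i
        rcases hdichot k i with h' | h'
        · rw [h']
        · rw [h']; linarith
      have hpair : ∑ i ∈ ({j, σ k} : Finset (Fin (d ^ 2))),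
          (‖inp (φ i) (ψ k)‖ ^ 2 - 1 / ((d : ℝ) + 1))
          ≤ ∑ i, (‖inp (φ i) (ψ k)‖ ^ 2 - 1 / ((d : ℝ) + 1)) :=
        Finset.sum_le_sum_of_subset_of_nonneg (Finset.subset_univ _)
          (fun i _ _ => by linarith [hge i])
      rw [Finset.sum_pair hne, h, hσ k] at hpair
      rw [Finset.sum_sub_distrib, hcol k, Finset.sum_const, Finset.card_univ,
        Fintype.card_fin, nsmul_eq_mul] at hpair
      have hid : (d : ℝ) - ((d ^ 2 : ℕ) : ℝ) * (1 / ((d : ℝ) + 1)) = 1 - 1 / ((d : ℝ) + 1) := by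
        push_cast
        field_simp
        ring
      rw [hid] at hpair
      linarith
  -- surjectivity of σ
  have hsurj : Function.Surjective σ := by
    intro j0
    by_contra hns
    push_neg at hns
    have hrow_t : ∀ k, ‖inp (φ j0) (ψ k)‖ ^ 2 = 1 / ((d : ℝ) + 1) :=
      fun k => huniq k j0 (fun h => hns k h.symm)
    have hp := hprod j0
    rw [Finset.prod_congr rfl fun k _ => hrow_t k, Finset.prod_const, Finset.card_univ,
      Fintype.card_fin] at hp
    have h4 : (1 / ((d : ℝ) + 1)) ^ (d ^ 2)
        = (1 / ((d : ℝ) + 1)) ^ (d ^ 2 - 1) * (1 / ((d : ℝ) + 1)) := by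
      rw [← pow_succ]
      congr 1
      omega
    rw [h4] at hp
    have h5 : (1 / ((d : ℝ) + 1)) ^ (d ^ 2 - 1) * (1 / ((d : ℝ) + 1))
        = (1 / ((d : ℝ) + 1)) ^ (d ^ 2 - 1) * 1 := by
      rw [mul_one]; exact hp
    have h6 := mul_left_cancel₀ (ne_of_gt hcpos) h5
    linarith
  have hinj : Function.Injective σ := Finite.injective_iff_surjective.mpr hsurj
  -- unimodular scalar representation
  have hrep : ∀ k, ∃ r : ℂ, ‖r‖ = 1 ∧ ψ k = r • φ (σ k) :=
    fun k => exists_smul_of_abs_sq_one (φ (σ k)) (ψ k) (hφ (σ k)) (hψ k) (hσ k)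
  choose ρ hρ1 hρ2 using hrep
  intro j k hjk
  have hσjk : σ j ≠ σ k := fun h => hjk (hinj h)
  rw [hρ2 j, hρ2 k, inp_smul_smul, norm_mul, norm_mul, Complex.norm_conj, hρ1 j, hρ1 k]
  rw [one_mul, one_mul]
  exact hφSIC (σ j) (σ k) hσjk
end

section
/- Let ψ₁, ψ₂, ψ₃, ψ₄ be four unit vectors in ℂ² forming a qubit SIC POVM, i.e., |⟨ψ_j, ψ_k⟩|² = 1/3 for all j ≠ k, and let A be the 4×4 Gram matrix with entries A_{jk} = ⟨ψ_j, ψ_k⟩. Then the permanent of A equals 8/3. -/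
open scoped BigOperators

/-- The permanent of an `n × n` complex matrix:
`perm(A) = ∑_{σ ∈ S_n} ∏_j A_{j, σ(j)}`. -/
noncomputable def permanent {n : ℕ} (A : Matrix (Fin n) (Fin n) ℂ) : ℂ :=
  ∑ σ : Equiv.Perm (Fin n), ∏ j, A j (σ j)

/-! Write the Gram matrix as `A = Vᴴ V`, where the columns of the `2 × 4` matrix `V` are the
vectors `ψ j`. The frame operator `S = V Vᴴ` is Hermitian with `tr S = tr A = 4` and
`tr S² = tr A² = 4 + 12 · 1/3 = 8 = (tr S)² / 2`. Since
`2 tr S² - (tr S)² = (S₀₀ - S₁₁)² + 4 |S₀₁|²` for a Hermitian `2 × 2` matrix, `S = 2 • 1`,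
so `A² = Vᴴ S V = 2 A`. Off the diagonal, `A² = 2 A` says that
`A i j * A j k + A i m * A m k = 0` whenever `i, j, k, m` are distinct.

Expand the permanent by cycle type: the identity contributes `1`, the six transpositions `1/3`
each, the three double transpositions `1/9` each; the eight `3`-cycles cancel in pairs
`(i j k), (i m k)`, and each of the six `4`-cycles equals `-1/9` after trading its path
`i → j → k` for `i → m → k`. The total is `1 + 2 + 1/3 - 2/3 = 8/3`. -/

open ComplexConjugate Finset
open scoped Matrix

theorem permanent_fin_four (A : Matrix (Fin 4) (Fin 4) ℂ) :
    permanent A =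
      A 0 0 * A 1 1 * A 2 2 * A 3 3 + A 0 0 * A 1 1 * A 2 3 * A 3 2 +
      A 0 0 * A 1 2 * A 2 1 * A 3 3 + A 0 0 * A 1 2 * A 2 3 * A 3 1 +
      A 0 0 * A 1 3 * A 2 1 * A 3 2 + A 0 0 * A 1 3 * A 2 2 * A 3 1 +
      A 0 1 * A 1 0 * A 2 2 * A 3 3 + A 0 1 * A 1 0 * A 2 3 * A 3 2 +
      A 0 1 * A 1 2 * A 2 0 * A 3 3 + A 0 1 * A 1 2 * A 2 3 * A 3 0 +
      A 0 1 * A 1 3 * A 2 0 * A 3 2 + A 0 1 * A 1 3 * A 2 2 * A 3 0 +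
      A 0 2 * A 1 0 * A 2 1 * A 3 3 + A 0 2 * A 1 0 * A 2 3 * A 3 1 +
      A 0 2 * A 1 1 * A 2 0 * A 3 3 + A 0 2 * A 1 1 * A 2 3 * A 3 0 +
      A 0 2 * A 1 3 * A 2 0 * A 3 1 + A 0 2 * A 1 3 * A 2 1 * A 3 0 +
      A 0 3 * A 1 0 * A 2 1 * A 3 2 + A 0 3 * A 1 0 * A 2 2 * A 3 1 +
      A 0 3 * A 1 1 * A 2 0 * A 3 2 + A 0 3 * A 1 1 * A 2 2 * A 3 0 +
      A 0 3 * A 1 2 * A 2 0 * A 3 1 + A 0 3 * A 1 2 * A 2 1 * A 3 0 := by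
  simp only [permanent, univ_perm_fin_succ, ← univ_product_univ, sum_map, sum_product,
    Fin.prod_univ_succ, Equiv.Perm.decomposeFin_symm_apply_zero,
    Equiv.Perm.decomposeFin_symm_apply_succ, Fin.prod_univ_zero, Equiv.toEmbedding_apply]
  simp only [Nat.succ_eq_add_one, Nat.reduceAdd, univ_unique, Fin.default_eq_zero, Fin.isValue,
    Equiv.Perm.default_eq, Fin.succ_zero_eq_one, Equiv.swap_apply_def, Fin.succ_ne_zero,
    ↓reduceIte, Fin.succ_one_eq_two, Fin.reduceSucc, mul_one, sum_const, card_singleton,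
    one_smul, sum_singleton, Fin.sum_univ_succ, one_ne_zero, Fin.reduceEq]
  ring

theorem sum_fin_four_of_nodup {M : Type*} [AddCommMonoid M] (f : Fin 4 → M) {i j k m : Fin 4}
    (h : [i, j, k, m].Nodup) : ∑ l, f l = f i + f j + f k + f m := by
  have huniv : [i, j, k, m].toFinset = univ :=
    eq_univ_of_card _ (by rw [List.toFinset_card_of_nodup h]; rfl)
  rw [← huniv, List.sum_toFinset _ h]
  simp [add_assoc]

theorem of_inp_eq_conjTranspose_mul {d n : ℕ} (ψ : Fin n → Fin d → ℂ) :
    Matrix.of (fun j k => inp (ψ j) (ψ k)) = (Matrix.of ψ)ᵀᴴ * (Matrix.of ψ)ᵀ := by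
  ext j k
  simp [inp, Matrix.mul_apply]

theorem Matrix.IsHermitian.eq_smul_one_of_two_mul_trace_mul_self
    {S : Matrix (Fin 2) (Fin 2) ℂ} (hS : S.IsHermitian) (h : 2 * (S * S).trace = S.trace ^ 2) :
    S = (S.trace / 2) • 1 := by
  obtain ⟨x, hx⟩ : ∃ x : ℝ, S 0 0 = x :=
    ⟨_, (Complex.conj_eq_iff_re.1 (hS.apply 0 0)).symm⟩
  obtain ⟨y, hy⟩ : ∃ y : ℝ, S 1 1 = y :=
    ⟨_, (Complex.conj_eq_iff_re.1 (hS.apply 1 1)).symm⟩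
  have h10 : S 1 0 = conj (S 0 1) := (hS.apply 1 0).symm
  have hsum : (x - y) ^ 2 + 4 * Complex.normSq (S 0 1) = 0 := by
    rw [trace_fin_two, trace_fin_two, mul_apply, mul_apply, Fin.sum_univ_two, Fin.sum_univ_two,
      hx, hy, h10, mul_comm (conj _), Complex.mul_conj] at h
    exact_mod_cast (by linear_combination h : ((x - y) ^ 2 + 4 * Complex.normSq (S 0 1) : ℂ) = 0)
  have hxy : x = y := by nlinarith [Complex.normSq_nonneg (S 0 1)]
  have h01 : S 0 1 = 0 := Complex.normSq_eq_zero.1 (by nlinarith [Complex.normSq_nonneg (S 0 1)])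
  ext i j
  fin_cases i <;> fin_cases j <;> simp [trace_fin_two, hx, hy, h10, h01, hxy]

theorem Matrix.conjTranspose_mul_self_mul_self_of_two_mul_trace {ι : Type*} [Fintype ι]
    (V : Matrix (Fin 2) ι ℂ) (h : 2 * (Vᴴ * V * (Vᴴ * V)).trace = (Vᴴ * V).trace ^ 2) :
    Vᴴ * V * (Vᴴ * V) = ((Vᴴ * V).trace / 2) • (Vᴴ * V) := by
  have htrace : (V * Vᴴ).trace = (Vᴴ * V).trace := trace_mul_comm _ _
  have htrace_sq : (V * Vᴴ * (V * Vᴴ)).trace = (Vᴴ * V * (Vᴴ * V)).trace := by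
    rw [Matrix.mul_assoc, trace_mul_comm]
    simp only [Matrix.mul_assoc]
  have hframe : V * Vᴴ = ((Vᴴ * V).trace / 2) • 1 := by
    rw [← htrace]
    exact (isHermitian_mul_conjTranspose_self V).eq_smul_one_of_two_mul_trace_mul_self
      (by rw [htrace, htrace_sq, h])
  calc Vᴴ * V * (Vᴴ * V) = Vᴴ * (V * Vᴴ) * V := by simp only [Matrix.mul_assoc]
    _ = ((Vᴴ * V).trace / 2) • (Vᴴ * V) := by
      rw [hframe, Matrix.mul_smul, Matrix.mul_one, Matrix.smul_mul]

section SICGram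

variable {A : Matrix (Fin 4) (Fin 4) ℂ}

theorem two_mul_trace_mul_self_eq_trace_sq (hdiag : ∀ j, A j j = 1)
    (hpair : ∀ j k, j ≠ k → A j k * A k j = 1 / 3) : 2 * (A * A).trace = A.trace ^ 2 := by
  simp [Matrix.trace, Matrix.mul_apply, Fin.sum_univ_four, hdiag, hpair]
  norm_num

theorem two_path_sum_eq_zero (hdiag : ∀ j, A j j = 1) (hsq : A * A = (2 : ℂ) • A)
    (i j k m : Fin 4) (h : [i, j, k, m].Nodup) :
    A i j * A j k + A i m * A m k = 0 := by
  have hik := congrFun (congrFun hsq i) k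
  rw [Matrix.mul_apply, sum_fin_four_of_nodup _ h, hdiag, hdiag, Matrix.smul_apply] at hik
  linear_combination hik

theorem three_cycle_add_three_cycle_eq_zero (hdiag : ∀ j, A j j = 1)
    (hsq : A * A = (2 : ℂ) • A) (i j k m : Fin 4) (h : [i, j, k, m].Nodup) :
    A i j * A j k * A k i + A i m * A m k * A k i = 0 := by
  linear_combination A k i * two_path_sum_eq_zero hdiag hsq i j k m h

theorem four_cycle_eq_neg_one_div_nine (hdiag : ∀ j, A j j = 1)
    (hpair : ∀ j k, j ≠ k → A j k * A k j = 1 / 3) (hsq : A * A = (2 : ℂ) • A)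
    (i j k m : Fin 4) (h : [i, j, k, m].Nodup) :
    A i j * A j k * A k m * A m i = -1 / 9 := by
  have him : i ≠ m := by simp_all
  have hmk : m ≠ k := (by simp_all : k ≠ m).symm
  linear_combination A k m * A m i * two_path_sum_eq_zero hdiag hsq i j k m h
    - A m k * A k m * hpair i m him - (1 / 3 : ℂ) * hpair m k hmk

theorem permanent_eq_eight_div_three (hdiag : ∀ j, A j j = 1)
    (hpair : ∀ j k, j ≠ k → A j k * A k j = 1 / 3) (hsq : A * A = (2 : ℂ) • A) :
    permanent A = 8 / 3 := by
  have hpair_mul :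
      ∀ j k a b, j ≠ k → a ≠ b → A j k * A k j * (A a b * A b a) = 1 / 9 := by
    intro j k a b hjk hab
    rw [hpair j k hjk, hpair a b hab]
    norm_num
  have hcycle3 := three_cycle_add_three_cycle_eq_zero hdiag hsq
  have hcycle4 := four_cycle_eq_neg_one_div_nine hdiag hpair hsq
  rw [permanent_fin_four]
  simp only [hdiag, one_mul, mul_one]
  linear_combination
    hpair 0 1 (by decide) + hpair 0 2 (by decide) + hpair 0 3 (by decide)
    + hpair 1 2 (by decide) + hpair 1 3 (by decide) + hpair 2 3 (by decide)
    + hpair_mul 0 1 2 3 (by decide) (by decide) + hpair_mul 0 2 1 3 (by decide) (by decide)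
    + hpair_mul 0 3 1 2 (by decide) (by decide)
    + hcycle3 3 1 2 0 (by decide) + hcycle3 2 1 3 0 (by decide)
    + hcycle3 1 2 0 3 (by decide) + hcycle3 0 2 1 3 (by decide)
    + hcycle4 0 1 2 3 (by decide) + hcycle4 0 1 3 2 (by decide)
    + hcycle4 0 2 3 1 (by decide) + hcycle4 0 2 1 3 (by decide)
    + hcycle4 0 3 2 1 (by decide) + hcycle4 0 3 1 2 (by decide)

end SICGram

theorem stmt18 (ψ : Fin 4 → (Fin 2 → ℂ)) (hψ : ∀ j, inp (ψ j) (ψ j) = 1)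
    (hSIC : ∀ j k, j ≠ k → ‖inp (ψ j) (ψ k)‖ ^ 2 = 1 / 3)
    (A : Matrix (Fin 4) (Fin 4) ℂ) (hA : ∀ j k, A j k = inp (ψ j) (ψ k)) :
    permanent A = 8 / 3 := by
  set V := (Matrix.of ψ)ᵀ
  have hgram : A = Vᴴ * V := by
    rw [← of_inp_eq_conjTranspose_mul]
    exact Matrix.ext hA
  have hherm : A.IsHermitian := hgram ▸ Matrix.isHermitian_conjTranspose_mul_self V
  have hdiag : ∀ j, A j j = 1 := fun j => (hA j j).trans (hψ j)
  have hpair : ∀ j k, j ≠ k → A j k * A k j = 1 / 3 := by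
    intro j k hjk
    rw [← hherm.apply k j, ← starRingEnd_apply, Complex.mul_conj, ← Complex.sq_norm, hA,
      hSIC j k hjk]
    norm_num
  have hsq : A * A = (2 : ℂ) • A := by
    have htrace : A.trace = 4 := by simp [Matrix.trace, hdiag]
    have htight := two_mul_trace_mul_self_eq_trace_sq hdiag hpair
    rw [hgram] at htight htrace ⊢
    rw [Matrix.conjTranspose_mul_self_mul_self_of_two_mul_trace V htight, htrace]
    norm_num
  exact permanent_eq_eight_div_three hdiag hpair hsq
end

section
/- Let d ≥ 1 and let ψ₁, …, ψ_{d²} be d² unit vectors in ℂ^d forming a SIC POVM, i.e., |⟨ψ_j, ψ_k⟩|² = 1/(d+1) for all j ≠ k. If ρ is a Hermitian d×d complex matrix satisfying ψ_j† ρ ψ_j = 1/d for all j = 1, …, d², then ρ = I/d. In particular, the completely mixed state is the only quantum state whose SIC POVM outcome probabilities are all equal to 1/d. -/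
open scoped BigOperators

/-! The rank-one projectors `P j = ψ j (ψ j)†` have trace Gram matrix
`tr (P k * P j) = if j = k then 1 else 1 / (d + 1)`, which is nonsingular; hence these `d ^ 2`
matrices are linearly independent and span all of `Matrix (Fin d) (Fin d) ℂ`. The values
`ψ j† ρ ψ j = tr (ρ * P j)` therefore determine `ρ`, and `I / d` has the same values. -/

open Matrix Module

theorem inp_eq_star_dotProduct {d : ℕ} (φ ψ : Fin d → ℂ) : inp φ ψ = star φ ⬝ᵥ ψ := rfl

theorem linearIndependent_of_apply_eq_ite {K V ι : Type*} [Field K] [AddCommGroup V]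
    [Module K V] [Fintype ι] [DecidableEq ι] (v : ι → V) (f : ι → V →ₗ[K] K) (μ : K)
    (hf : ∀ j k, f k (v j) = if j = k then 1 else μ) (hμ : μ ≠ 1)
    (hsum : 1 + (Fintype.card ι - 1) * μ ≠ 0) : LinearIndependent K v := by
  rw [Fintype.linearIndependent_iff]
  intro c hc
  have hk : ∀ k, μ * ∑ j, c j + (1 - μ) * c k = 0 := fun k => by
    have hfk := congrArg (f k) hc
    simp only [map_sum, map_smul, hf, smul_eq_mul, map_zero] at hfk
    have hsplit : ∀ j, c j * (if j = k then 1 else μ) =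
        μ * c j + if j = k then (1 - μ) * c j else 0 := fun j => by split_ifs <;> ring
    rwa [Finset.sum_congr rfl fun j _ => hsplit j, Finset.sum_add_distrib,
      Finset.sum_ite_eq', if_pos (Finset.mem_univ k), ← Finset.mul_sum] at hfk
  have hS : ∑ j, c j = 0 := by
    have htotal := Finset.sum_congr rfl fun k (_ : k ∈ Finset.univ) => hk k
    rw [Finset.sum_add_distrib, ← Finset.mul_sum, ← Finset.mul_sum, Finset.sum_const,
      Finset.card_univ, nsmul_eq_mul, Finset.sum_const_zero] at htotal
    refine (mul_eq_zero.1 ?_).resolve_left hsum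
    linear_combination htotal
  intro k
  simpa [hS, sub_eq_zero, hμ.symm] using hk k

theorem Matrix.trace_mul_vecMulVec {R n : Type*} [CommSemiring R] [Fintype n]
    (A : Matrix n n R) (v w : n → R) : trace (A * vecMulVec v w) = w ⬝ᵥ A *ᵥ v := by
  rw [mul_vecMulVec, trace_vecMulVec, dotProduct_comm]

theorem Matrix.trace_vecMulVec_star_mul_vecMulVec_star {𝕜 n : Type*} [RCLike 𝕜] [Fintype n]
    (u v : n → 𝕜) :
    trace (vecMulVec u (star u) * vecMulVec v (star v)) = ((‖star u ⬝ᵥ v‖ ^ 2 : ℝ) : 𝕜) := by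
  have hconj : star (star u ⬝ᵥ v) = star v ⬝ᵥ u := by rw [star_dotProduct, star_star]
  rw [trace_mul_vecMulVec, vecMulVec_mulVec, dotProduct_smul, ← hconj, op_smul_eq_mul,
    RCLike.star_def, RCLike.conj_mul, RCLike.ofReal_pow]

theorem Matrix.eq_of_forall_trace_mul_eq {K n ι : Type*} [CommSemiring K] [Fintype n]
    {P : ι → Matrix n n K} (hP : Submodule.span K (Set.range P) = ⊤)
    {A B : Matrix n n K} (h : ∀ j, trace (A * P j) = trace (B * P j)) : A = B := by
  refine ext_iff_trace_mul_right.2 fun X => ?_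
  have hext := LinearMap.ext_on_range hP
    (f := (traceLinearMap n K K).comp (LinearMap.mulLeft K A))
    (g := (traceLinearMap n K K).comp (LinearMap.mulLeft K B)) h
  exact congrArg (· X) hext

theorem stmt19_general (d : ℕ) (hd : 1 ≤ d)
    (ψ : Fin (d ^ 2) → (Fin d → ℂ)) (hψ : ∀ j, inp (ψ j) (ψ j) = 1)
    (hSIC : ∀ j k, j ≠ k →
      ‖inp (ψ j) (ψ k)‖ ^ 2 = 1 / (d + 1))
    (ρ : Matrix (Fin d) (Fin d) ℂ)
    (hprob : ∀ j, dotProduct (star (ψ j)) (ρ.mulVec (ψ j)) = 1 / d) :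
    ρ = ((d : ℂ))⁻¹ • (1 : Matrix (Fin d) (Fin d) ℂ) := by
  have hd₀ : (d : ℂ) ≠ 0 := Nat.cast_ne_zero.2 (Nat.one_le_iff_ne_zero.1 hd)
  have hd₁ : (d : ℂ) + 1 ≠ 0 := by exact_mod_cast Nat.succ_ne_zero d
  set P : Fin (d ^ 2) → Matrix (Fin d) (Fin d) ℂ := fun j => vecMulVec (ψ j) (star (ψ j))
  have hgram (j k) : trace (P k * P j) = if j = k then 1 else 1 / ((d : ℂ) + 1) := by
    rw [trace_vecMulVec_star_mul_vecMulVec_star, ← inp_eq_star_dotProduct]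
    split_ifs with h
    · simp [h, hψ]
    · simp [hSIC k j (Ne.symm h)]
  have hli : LinearIndependent ℂ P :=
    linearIndependent_of_apply_eq_ite P
      (fun k => (traceLinearMap _ ℂ ℂ).comp (LinearMap.mulLeft ℂ (P k))) _ hgram
      (by rw [Ne, div_eq_one_iff_eq hd₁]; simpa using hd₀)
      (by
        rw [Fintype.card_fin, Nat.cast_pow]
        convert hd₀ using 1
        field_simp
        ring)
  have hspan := hli.span_eq_top_of_card_eq_finrank' (by simp [finrank_matrix]; ring)
  refine eq_of_forall_trace_mul_eq hspan fun j => ?_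
  rw [trace_mul_vecMulVec, trace_mul_vecMulVec, hprob, smul_mulVec, one_mulVec,
    dotProduct_smul, ← inp_eq_star_dotProduct, hψ]
  simp

theorem stmt19 (d : ℕ) (hd : 1 ≤ d)
    (ψ : Fin (d ^ 2) → (Fin d → ℂ)) (hψ : ∀ j, inp (ψ j) (ψ j) = 1)
    (hSIC : ∀ j k, j ≠ k →
      ‖inp (ψ j) (ψ k)‖ ^ 2 = 1 / (d + 1))
    (ρ : Matrix (Fin d) (Fin d) ℂ) (hρ : ρ.IsHermitian)
    (hprob : ∀ j, dotProduct (star (ψ j)) (ρ.mulVec (ψ j)) = 1 / d) :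
    ρ = ((d : ℂ))⁻¹ • (1 : Matrix (Fin d) (Fin d) ℂ) :=
  stmt19_general d hd ψ hψ hSIC ρ hprob
end
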